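/- arXiv:2002.04063 — 7 statements merged into one kernel-verified Lean document; each statement's English description precedes it below -/
import Mathlib

section
/- Let a > 0, c ≥ 1, θ ∈ (0,1], and k ≥ 1 an integer. Suppose a sequence (a_i)_{i=0}^k of reals satisfies a_0 = 0 and a_i ≥ a_{i-1} + (a^θ/(k c)) · (a - a_{i-1})^{1-θ} for all i ∈ [k], with a_i ≤ a. Then a_k ≥ a · [1 - (1 - θ/c)^{1/θ}]. -/
/-!
The gaps `x i = A - a i` satisfy `x (i+1) ≤ x i - δ x i ^ (1-θ)` with `δ = A^θ/(k c)`.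
By concavity of `t ↦ t ^ θ` (Bernoulli's inequality), such a step lowers `x ^ θ` by at least
`θ δ`, so `(A - a k) ^ θ ≤ A ^ θ - k θ δ = A ^ θ (1 - θ/c)`; taking `θ`-th roots gives the bound.
-/

open Real

theorem rpow_le_rpow_add_mul_sub {x y θ : ℝ} (hx : 0 < x) (hy : 0 ≤ y) (hθ0 : 0 ≤ θ)
    (hθ1 : θ ≤ 1) : y ^ θ ≤ x ^ θ + θ * x ^ (θ - 1) * (y - x) := by
  have hs : -1 ≤ y / x - 1 := by linarith [div_nonneg hy hx.le]
  calc y ^ θ = x ^ θ * (1 + (y / x - 1)) ^ θ := by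
        rw [add_sub_cancel, div_rpow hy hx.le, mul_div_cancel₀ _ (rpow_pos_of_pos hx θ).ne']
    _ ≤ x ^ θ * (1 + θ * (y / x - 1)) := by
        gcongr
        exact rpow_one_add_le_one_add_mul_self hs hθ0 hθ1
    _ = x ^ θ + θ * x ^ (θ - 1) * (y - x) := by
        rw [rpow_sub_one hx.ne']
        field_simp

theorem rpow_le_rpow_sub_of_le_sub_mul_rpow {x y δ θ : ℝ} (hx : 0 < x) (hy : 0 ≤ y)
    (hθ0 : 0 ≤ θ) (hθ1 : θ ≤ 1) (h : y ≤ x - δ * x ^ (1 - θ)) :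
    y ^ θ ≤ x ^ θ - θ * δ := by
  have hinv : x ^ (θ - 1) * x ^ (1 - θ) = 1 := by
    rw [← rpow_add hx]
    simp
  calc y ^ θ ≤ x ^ θ + θ * x ^ (θ - 1) * (y - x) := rpow_le_rpow_add_mul_sub hx hy hθ0 hθ1
    _ ≤ x ^ θ + θ * x ^ (θ - 1) * -(δ * x ^ (1 - θ)) := by
        gcongr
        linarith
    _ = x ^ θ - θ * δ := by linear_combination (-θ * δ) * hinv

theorem rpow_le_sub_mul_of_le_sub_mul_rpow {x : ℕ → ℝ} {δ θ : ℝ} {n : ℕ} (hδ : 0 ≤ δ)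
    (hθ0 : 0 < θ) (hθ1 : θ ≤ 1) (hx : ∀ i ≤ n, 0 ≤ x i)
    (hstep : ∀ i < n, x (i + 1) ≤ x i - δ * x i ^ (1 - θ)) (hn : n * θ * δ ≤ x 0 ^ θ) :
    ∀ i ≤ n, x i ^ θ ≤ x 0 ^ θ - i * θ * δ := by
  intro i
  induction i with
  | zero => simp
  | succ i ih =>
    intro hi
    have hdrop : ((i + 1 : ℕ) : ℝ) * θ * δ ≤ n * θ * δ := by gcongr
    have hsucc := hstep i hi
    rcases (hx i (by omega)).eq_or_lt with hzero | hpos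
    · have hnext : x (i + 1) = 0 := by
        rw [← hzero] at hsucc
        exact le_antisymm (by nlinarith [rpow_nonneg le_rfl (1 - θ)]) (hx (i + 1) hi)
      rw [hnext, zero_rpow hθ0.ne']
      linarith
    · push_cast
      linarith [ih (by omega),
        rpow_le_rpow_sub_of_le_sub_mul_rpow hpos (hx (i + 1) hi) hθ0.le hθ1 hsucc]

theorem greedy_recurrence_general (A c θ : ℝ) (k : ℕ) (hc : 1 ≤ c)
    (hθ0 : 0 < θ) (hθ1 : θ ≤ 1) (hk : 1 ≤ k)
    (a : ℕ → ℝ) (h0 : a 0 = 0) (hle : ∀ i ≤ k, a i ≤ A)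
    (hrec : ∀ i, 1 ≤ i → i ≤ k →
      a i ≥ a (i - 1) + (A ^ θ / (k * c)) * (A - a (i - 1)) ^ (1 - θ)) :
    a k ≥ A * (1 - (1 - θ / c) ^ (1 / θ)) := by
  have hA : 0 ≤ A := h0 ▸ hle 0 k.zero_le
  have hθc : θ / c ≤ 1 := (div_le_one (by linarith)).2 (hθ1.trans hc)
  have hkθδ : k * θ * (A ^ θ / (k * c)) = A ^ θ * (θ / c) := by
    have : (k : ℝ) ≠ 0 := Nat.cast_ne_zero.2 (by omega)
    field_simp
  have hgap := rpow_le_sub_mul_of_le_sub_mul_rpow (x := fun i ↦ A - a i)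
    (δ := A ^ θ / (k * c)) (by positivity)
    hθ0 hθ1 (fun i hi ↦ sub_nonneg.2 (hle i hi))
    (fun i hi ↦ by
      have := hrec (i + 1) (by omega) hi
      rw [Nat.add_sub_cancel] at this
      linarith)
    (by simpa [h0, hkθδ] using mul_le_of_le_one_right (rpow_nonneg hA θ) hθc) k le_rfl
  simp only [h0, sub_zero, hkθδ, ← mul_one_sub] at hgap
  have hroot : A - a k ≤ (A ^ θ * (1 - θ / c)) ^ θ⁻¹ :=
    (le_rpow_inv_iff_of_pos (sub_nonneg.2 (hle k le_rfl))
      (mul_nonneg (rpow_nonneg hA θ) (by linarith)) hθ0).2 hgap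
  rw [mul_rpow (rpow_nonneg hA θ) (by linarith), rpow_rpow_inv hA hθ0.ne'] at hroot
  rw [one_div, ge_iff_le]
  linarith

/-- Solving the recurrence arising in the greedy analysis for `(c,θ)`-monotonic sharp
functions: if `a 0 = 0`, `a i ≤ A` for `i ≤ k`, and
`a i ≥ a (i-1) + (A^θ/(k c)) (A - a (i-1))^(1-θ)` for `1 ≤ i ≤ k`, then
`a k ≥ A (1 - (1 - θ/c)^(1/θ))`. -/
theorem greedy_recurrence (A c θ : ℝ) (k : ℕ) (hA : 0 < A) (hc : 1 ≤ c)
    (hθ0 : 0 < θ) (hθ1 : θ ≤ 1) (hk : 1 ≤ k)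
    (a : ℕ → ℝ) (h0 : a 0 = 0) (hle : ∀ i ≤ k, a i ≤ A)
    (hrec : ∀ i, 1 ≤ i → i ≤ k →
      a i ≥ a (i - 1) + (A ^ θ / (k * c)) * (A - a (i - 1)) ^ (1 - θ)) :
    a k ≥ A * (1 - (1 - θ / c) ^ (1 / θ)) :=
  greedy_recurrence_general A c θ k hc hθ0 hθ1 hk a h0 hle hrec
end

section
/- Let f : 2^V → ℝ≥0 be monotone and submodular, and S* optimal for max{f(S):|S|≤k}. If f is (c,θ)-monotonic sharp, i.e., Σ_{e∈S*\S} f_S(e) ≥ (|S*\S|/(kc))^{1/θ}·f(S*) for all |S| ≤ k, then f is (c,θ)-submodular sharp: max_{e∈S*\S} f_S(e) ≥ (1/(kc))·(f(S*)-f(S))^{1-θ}·f(S*)^θ for all |S| ≤ k with f(S) ≤ f(S*). -/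
/-! Submodularity makes the marginal gains `f_S(e)`, `e ∈ S* \ S`, add up to at least
`f(S*) - f(S)`, while monotonic sharpness bounds their sum below by
`(|S* \ S| / (kc))^{1/θ} f(S*)`. A quantity dominating two nonnegative numbers dominates their
weighted geometric mean, here with weights `1 - θ` and `θ`, which is
`|S* \ S| / (kc) · (f(S*) - f(S))^{1-θ} f(S*)^θ`; the largest gain is at least the average. -/

open Finset

theorem union_sub_le_sum_insert_sub {V β : Type*} [DecidableEq V] [AddCommGroup β]
    [PartialOrder β] [IsOrderedAddMonoid β] (f : Finset V → β)
    (hsub : ∀ (A B : Finset V) (e : V), A ⊆ B → e ∉ B →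
      f (insert e B) - f B ≤ f (insert e A) - f A)
    (S T : Finset V) :
    f (S ∪ T) - f S ≤ ∑ e ∈ T, (f (insert e S) - f S) := by
  induction T using Finset.induction_on with
  | empty => simp
  | insert a T haT ih =>
    rw [sum_insert haT, union_insert]
    by_cases haS : a ∈ S
    · rwa [insert_eq_of_mem (mem_union_left T haS), insert_eq_of_mem haS, sub_self, zero_add]
    · have ha : a ∉ S ∪ T := by simp [haS, haT]
      rw [← sub_add_sub_cancel _ (f (S ∪ T))]
      exact add_le_add (hsub S _ a subset_union_left ha) ih

theorem Real.rpow_one_sub_mul_rpow_le {x y s θ : ℝ} (hx : 0 ≤ x) (hy : 0 ≤ y) (hxs : x ≤ s)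
    (hys : y ≤ s) (hθ0 : 0 ≤ θ) (hθ1 : θ ≤ 1) : x ^ (1 - θ) * y ^ θ ≤ s :=
  calc x ^ (1 - θ) * y ^ θ ≤ (1 - θ) * x + θ * y :=
        Real.geom_mean_le_arith_mean2_weighted (by linarith) hθ0 hx hy (by ring)
    _ ≤ (1 - θ) * s + θ * s := by gcongr
    _ = s := by ring

theorem monotonic_sharp_implies_submodular_sharp_general {V : Type*} [DecidableEq V]
    (f : Finset V → ℝ) (k : ℕ)
    (c θ : ℝ) (hc : 1 ≤ c) (hθ0 : 0 < θ) (hθ1 : θ ≤ 1)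
    (hnn : ∀ S : Finset V, 0 ≤ f S)
    (hmono : ∀ A B : Finset V, A ⊆ B → f A ≤ f B)
    (hsub : ∀ (A B : Finset V) (e : V), A ⊆ B → e ∉ B →
      f (insert e B) - f B ≤ f (insert e A) - f A)
    (Sstar : Finset V)
    (hsharp : ∀ S : Finset V, S.card ≤ k →
      ∑ e ∈ Sstar \ S, (f (insert e S) - f S) ≥
        (((Sstar \ S).card : ℝ) / (k * c)) ^ (1 / θ) * f Sstar) :
    ∀ S : Finset V, S.card ≤ k → f S ≤ f Sstar → (Sstar \ S).Nonempty →
      ∃ e ∈ Sstar \ S, f (insert e S) - f S ≥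
        (1 / (k * c)) * (f Sstar - f S) ^ (1 - θ) * f Sstar ^ θ := by
  intro S hS hfS hne
  have ha : 0 ≤ ((Sstar \ S).card : ℝ) / (k * c) := by positivity
  have hgain : f Sstar - f S ≤ ∑ e ∈ Sstar \ S, (f (insert e S) - f S) := by
    have := union_sub_le_sum_insert_sub f hsub S (Sstar \ S)
    rw [union_sdiff_self_eq_union] at this
    linarith [hmono _ _ (subset_union_right : Sstar ⊆ S ∪ Sstar)]
  have hbound := Real.rpow_one_sub_mul_rpow_le (sub_nonneg.2 hfS)
    (mul_nonneg (Real.rpow_nonneg ha _) (hnn _)) hgain (hsharp S hS) hθ0.le hθ1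
  rw [Real.mul_rpow (Real.rpow_nonneg ha _) (hnn _), one_div,
    Real.rpow_inv_rpow ha hθ0.ne'] at hbound
  refine exists_le_of_sum_le hne ?_
  rw [sum_const, nsmul_eq_mul]
  exact le_of_eq_of_le (by ring) hbound

/-- Monotonic sharpness implies submodular sharpness: if a monotone submodular
nonnegative `f` with optimal `S*` is `(c,θ)`-monotonic sharp, then for every feasible
`S` with `f S ≤ f S*` and `S* \ S` nonempty there is `e ∈ S* \ S` with
`f_S(e) ≥ (1/(kc)) (f S* - f S)^{1-θ} (f S*)^θ`. -/
theorem monotonic_sharp_implies_submodular_sharp {V : Type*} [DecidableEq V]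
    (f : Finset V → ℝ) (k : ℕ) (hk : 1 ≤ k)
    (c θ : ℝ) (hc : 1 ≤ c) (hθ0 : 0 < θ) (hθ1 : θ ≤ 1)
    (hnn : ∀ S : Finset V, 0 ≤ f S)
    (hmono : ∀ A B : Finset V, A ⊆ B → f A ≤ f B)
    (hsub : ∀ (A B : Finset V) (e : V), A ⊆ B → e ∉ B →
      f (insert e B) - f B ≤ f (insert e A) - f A)
    (Sstar : Finset V) (hSk : Sstar.card ≤ k)
    (hopt : ∀ S : Finset V, S.card ≤ k → f S ≤ f Sstar)
    (hsharp : ∀ S : Finset V, S.card ≤ k →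
      ∑ e ∈ Sstar \ S, (f (insert e S) - f S) ≥
        (((Sstar \ S).card : ℝ) / (k * c)) ^ (1 / θ) * f Sstar) :
    ∀ S : Finset V, S.card ≤ k → f S ≤ f Sstar → (Sstar \ S).Nonempty →
      ∃ e ∈ Sstar \ S, f (insert e S) - f S ≥
        (1 / (k * c)) * (f Sstar - f S) ^ (1 - θ) * f Sstar ^ θ :=
  monotonic_sharp_implies_submodular_sharp_general f k c θ hc hθ0 hθ1 hnn hmono hsub Sstar hsharp
end

section
/- Let f : 2^V → ℝ≥0 be monotone, submodular, f(∅)=0, and (c,θ)-monotonic sharp with c ≥ 1, θ ∈ (0,1] relative to an optimal S* of max{f(S):|S|≤k}. Then greedy returns S^g with f(S^g) ≥ [1 - (1 - θ/c)^{1/θ}]·f(S*). -/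
/-!
Write `K = k c`, `F = f S*` and `tᵢ = (F - f(Sᵢ)) / F` for the normalised gap after `i` greedy steps,
and `M = |S* \ Sᵢ|`. Submodularity bounds `F - f(Sᵢ)` by the sum of the marginal values on `S* \ Sᵢ`,
and sharpness bounds that sum from below by `(M / K)^{1/θ} F`; since greedy gains at least the
largest of these `M` marginal values, its gain `Dᵢ` satisfies `Dᵢ / F ≥ max (tᵢ / M, (M / K)^{1/θ} / M)`.
Minimising over `M` gives `tᵢ₊₁ ≤ tᵢ - tᵢ^{1-θ} / K`, and Bernoulli's inequality `(1 - x)^θ ≤ 1 - θ x`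
shows that this recursion preserves `tᵢ^θ ≤ 1 - θ i / K`. At `i = k` this is `t_k ≤ (1 - θ / c)^{1/θ}`.
-/

open Real Finset

lemma rpow_one_sub_div_le_max {θ K t M : ℝ} (hθ0 : 0 < θ) (hθ1 : θ ≤ 1) (hK : 0 < K)
    (ht : 0 < t) (hM : 0 < M) :
    t ^ (1 - θ) / K ≤ max (t / M) ((M / K) ^ (1 / θ) / M) := by
  have htθ : 0 < t ^ θ := rpow_pos_of_pos ht θ
  rcases le_or_gt M (K * t ^ θ) with hMle | hMgt
  · refine le_max_of_le_left ?_
    calc t ^ (1 - θ) / K = t / (K * t ^ θ) := by rw [rpow_sub ht, rpow_one]; field_simp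
      _ ≤ t / M := div_le_div_of_nonneg_left ht.le hM hMle
  · refine le_max_of_le_right ?_
    have hMK : t ^ θ < M / K := by rwa [lt_div_iff₀' hK]
    have hexp : 0 ≤ 1 / θ - 1 := by rw [sub_nonneg]; exact one_le_one_div hθ0 hθ1
    calc t ^ (1 - θ) / K = (t ^ θ) ^ (1 / θ - 1) / K := by
          rw [← rpow_mul ht.le]; congr 2; field_simp
      _ ≤ (M / K) ^ (1 / θ - 1) / K := by gcongr
      _ = (M / K) ^ (1 / θ) / M := by rw [rpow_sub_one (by positivity)]; field_simp

lemma sub_rpow_one_sub_div_le {θ K t u : ℝ} (hθ0 : 0 < θ) (hθ1 : θ ≤ 1) (hK : 0 < K)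
    (ht : 0 < t) (htu : t ^ θ ≤ u) (hθu : θ / K ≤ u) :
    t - t ^ (1 - θ) / K ≤ (u - θ / K) ^ (1 / θ) := by
  set w := 1 - t ^ (-θ) / K with hw_def
  have hsplit : t - t ^ (1 - θ) / K = t * w := by
    rw [sub_eq_add_neg 1 θ, rpow_add ht, rpow_one]; ring
  rw [hsplit]
  rcases le_or_gt w 0 with hw | hw
  · exact (mul_nonpos_of_nonneg_of_nonpos ht.le hw).trans (rpow_nonneg (sub_nonneg.2 hθu) _)
  have hbernoulli : w ^ θ ≤ 1 - θ * (t ^ (-θ) / K) := by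
    simpa [hw_def, sub_eq_add_neg] using
      rpow_one_add_le_one_add_mul_self (s := -(t ^ (-θ) / K)) (by linarith) hθ0.le hθ1
  have hpow : (t * w) ^ θ ≤ u - θ / K := calc
    (t * w) ^ θ = t ^ θ * w ^ θ := mul_rpow ht.le hw.le
    _ ≤ t ^ θ * (1 - θ * (t ^ (-θ) / K)) := by gcongr
    _ = t ^ θ - θ / K := by rw [rpow_neg ht.le]; field_simp
    _ ≤ u - θ / K := by linarith
  rw [one_div]
  exact (le_rpow_inv_iff_of_pos (by positivity) (by linarith) hθ0).2 hpow

lemma le_rpow_of_sub_rpow_recurrence {θ K : ℝ} {n : ℕ} {t : ℕ → ℝ} (hθ0 : 0 < θ) (hθ1 : θ ≤ 1)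
    (hK : 0 < K) (hn : θ * n ≤ K) (h0 : t 0 ≤ 1) (hanti : ∀ i < n, t (i + 1) ≤ t i)
    (hstep : ∀ i < n, 0 < t i → t (i + 1) ≤ t i - t i ^ (1 - θ) / K) :
    ∀ i ≤ n, t i ≤ (1 - θ * i / K) ^ (1 / θ) := by
  intro i
  induction i with
  | zero => simpa using h0
  | succ i ih =>
    intro hi
    have hθi : θ * (i + 1) ≤ K := le_trans (by gcongr; exact_mod_cast hi) hn
    have hbase : 0 ≤ 1 - θ * (i + 1) / K := by rw [sub_nonneg, div_le_one hK]; exact hθi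
    push_cast
    rcases le_or_gt (t i) 0 with hti | hti
    · exact (hanti i hi).trans (hti.trans (rpow_nonneg hbase _))
    have hsplit : θ * (i + 1) / K = θ * i / K + θ / K := by ring
    have hu : θ / K ≤ 1 - θ * i / K := by linarith
    have htu : t i ^ θ ≤ 1 - θ * i / K :=
      (le_rpow_inv_iff_of_pos hti.le (hu.trans' (by positivity)) hθ0).1
        (by rw [← one_div]; exact ih (by omega))
    calc t (i + 1) ≤ t i - t i ^ (1 - θ) / K := hstep i hi hti
      _ ≤ (1 - θ * i / K - θ / K) ^ (1 / θ) := sub_rpow_one_sub_div_le hθ0 hθ1 hK hti htu hu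
      _ = (1 - θ * (i + 1) / K) ^ (1 / θ) := by rw [hsplit, sub_add_eq_sub_sub]

section SetFunction

variable {V : Type*} [DecidableEq V]

def Submodular (f : Finset V → ℝ) : Prop :=
  ∀ (A B : Finset V) (e : V), A ⊆ B → e ∉ B → f (insert e B) - f B ≤ f (insert e A) - f A

lemma Submodular.le_add_sum_marginal {f : Finset V → ℝ} (hf : Submodular f) (S : Finset V)
    {T : Finset V} (hT : Disjoint T S) :
    f (S ∪ T) ≤ f S + ∑ e ∈ T, (f (insert e S) - f S) := by
  induction T using Finset.induction_on with
  | empty => simp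
  | @insert a T ha ih =>
    rw [disjoint_insert_left] at hT
    have hmarg := hf S (S ∪ T) a subset_union_left (by simp [hT.1, ha])
    rw [union_insert, sum_insert ha]
    linarith [ih hT.2]

lemma gap_rpow_le_greedy_gain {f : Finset V → ℝ} (hmono : Monotone f) (hsub : Submodular f)
    {θ K : ℝ} (hθ0 : 0 < θ) (hθ1 : θ ≤ 1) (hK : 0 < K) {S Sstar : Finset V} {e : V}
    (hmax : ∀ e' ∉ S, f (insert e' S) - f S ≤ f (insert e S) - f S)
    (hsharp : ∑ e' ∈ Sstar \ S, (f (insert e' S) - f S) ≥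
      (((Sstar \ S).card : ℝ) / K) ^ (1 / θ) * f Sstar)
    (hF : 0 < f Sstar) (hgap : f S < f Sstar) :
    ((f Sstar - f S) / f Sstar) ^ (1 - θ) / K ≤ (f (insert e S) - f S) / f Sstar := by
  set F := f Sstar
  set D := f (insert e S) - f S
  set M : ℝ := ((Sstar \ S).card : ℝ) with hM_def
  have hM : 0 < M := by
    have hnsub : ¬ Sstar ⊆ S := fun h => (hmono h).not_gt hgap
    rw [hM_def]; exact_mod_cast card_pos.2 (sdiff_nonempty.2 hnsub)
  have hsum : ∑ e' ∈ Sstar \ S, (f (insert e' S) - f S) ≤ M * D := by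
    simpa [nsmul_eq_mul] using
      sum_le_card_nsmul _ _ D fun e' he' => hmax e' (mem_sdiff.1 he').2
  have hcover : F - f S ≤ ∑ e' ∈ Sstar \ S, (f (insert e' S) - f S) := by
    have h := hsub.le_add_sum_marginal S (sdiff_disjoint : Disjoint (Sstar \ S) S)
    rw [union_sdiff_self_eq_union] at h
    linarith [hmono (subset_union_right : Sstar ⊆ S ∪ Sstar)]
  calc ((F - f S) / F) ^ (1 - θ) / K
      ≤ max ((F - f S) / F / M) ((M / K) ^ (1 / θ) / M) :=
        rpow_one_sub_div_le_max hθ0 hθ1 hK (div_pos (sub_pos.2 hgap) hF) hM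
    _ ≤ D / F := by
        refine max_le ?_ ?_
        · rw [div_div, div_le_div_iff₀ (mul_pos hF hM) hF]; nlinarith
        · rw [div_le_div_iff₀ hM hF]; linarith

lemma card_eq_of_insert_steps {g : ℕ → Finset V} {n : ℕ} (h0 : g 0 = ∅)
    (hstep : ∀ i < n, ∃ e ∉ g i, g (i + 1) = insert e (g i)) :
    ∀ i ≤ n, (g i).card = i := by
  intro i
  induction i with
  | zero => simp [h0]
  | succ i ih =>
    intro hi
    obtain ⟨e, he, hins⟩ := hstep i hi
    rw [hins, card_insert_of_notMem he, ih (by omega)]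

end SetFunction

theorem greedy_monotonic_sharp_general {V : Type*} [DecidableEq V]
    (f : Finset V → ℝ) (k : ℕ) (hk : 1 ≤ k)
    (c θ : ℝ) (hc : 1 ≤ c) (hθ0 : 0 < θ) (hθ1 : θ ≤ 1)
    (hnn : ∀ S : Finset V, 0 ≤ f S)
    (hmono : ∀ A B : Finset V, A ⊆ B → f A ≤ f B)
    (hsub : ∀ (A B : Finset V) (e : V), A ⊆ B → e ∉ B →
      f (insert e B) - f B ≤ f (insert e A) - f A)
    (Sstar : Finset V)
    (hsharp : ∀ S : Finset V, S.card ≤ k →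
      ∑ e ∈ Sstar \ S, (f (insert e S) - f S) ≥
        (((Sstar \ S).card : ℝ) / (k * c)) ^ (1 / θ) * f Sstar)
    (g : ℕ → Finset V) (hg0 : g 0 = ∅)
    (hstep : ∀ i, i < k → ∃ e, e ∉ g i ∧ g (i + 1) = insert e (g i) ∧
      ∀ e', e' ∉ g i → f (insert e' (g i)) - f (g i) ≤ f (insert e (g i)) - f (g i)) :
    f (g k) ≥ (1 - (1 - θ / c) ^ (1 / θ)) * f Sstar := by
  rcases (hnn Sstar).eq_or_lt with hF | hF
  · simpa [← hF] using hnn (g k)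
  have hk0 : (0 : ℝ) < k := by exact_mod_cast hk
  have hK : 0 < (k : ℝ) * c := mul_pos hk0 (by linarith)
  have hcard := card_eq_of_insert_steps hg0 fun i hi => (hstep i hi).imp fun _ h => ⟨h.1, h.2.1⟩
  set t : ℕ → ℝ := fun i => (f Sstar - f (g i)) / f Sstar
  have hanti : ∀ i < k, t (i + 1) ≤ t i := by
    intro i hi
    obtain ⟨e, -, hins, -⟩ := hstep i hi
    exact div_le_div_of_nonneg_right (by rw [hins]; linarith [hmono _ _ (subset_insert e (g i))]) hF.le
  have hgreedy : ∀ i < k, 0 < t i → t (i + 1) ≤ t i - t i ^ (1 - θ) / (k * c) := by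
    intro i hi hti
    obtain ⟨e, -, hins, hmax⟩ := hstep i hi
    have hgap : f (g i) < f Sstar := by simpa [t, div_pos_iff_of_pos_right hF] using hti
    have hgain := gap_rpow_le_greedy_gain hmono hsub hθ0 hθ1 hK hmax
      (hsharp _ ((hcard i hi.le).trans_le hi.le)) hF hgap
    have hsplit : t (i + 1) = t i - (f (insert e (g i)) - f (g i)) / f Sstar := by
      simp only [t, hins]; ring
    linarith
  have h0 : t 0 ≤ 1 := by
    rw [div_le_one hF, hg0]; linarith [hnn ∅]
  have hdecay := le_rpow_of_sub_rpow_recurrence hθ0 hθ1 hK (by nlinarith) h0 hanti hgreedy k le_rfl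
  rw [show θ * k / (k * c) = θ / c by field_simp, div_le_iff₀ hF] at hdecay
  linarith

/-- Theorem 1: if a monotone submodular nonnegative `f` with `f ∅ = 0` is
`(c,θ)`-monotonic sharp relative to an optimal solution `S*` of `max {f S : |S| ≤ k}`,
then greedy returns `g k` with `f (g k) ≥ (1 - (1 - θ/c)^{1/θ}) f S*`. -/
theorem greedy_monotonic_sharp {V : Type*} [DecidableEq V]
    (f : Finset V → ℝ) (k : ℕ) (hk : 1 ≤ k)
    (c θ : ℝ) (hc : 1 ≤ c) (hθ0 : 0 < θ) (hθ1 : θ ≤ 1)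
    (hnn : ∀ S : Finset V, 0 ≤ f S) (hemp : f ∅ = 0)
    (hmono : ∀ A B : Finset V, A ⊆ B → f A ≤ f B)
    (hsub : ∀ (A B : Finset V) (e : V), A ⊆ B → e ∉ B →
      f (insert e B) - f B ≤ f (insert e A) - f A)
    (Sstar : Finset V) (hSk : Sstar.card ≤ k)
    (hopt : ∀ S : Finset V, S.card ≤ k → f S ≤ f Sstar)
    (hsharp : ∀ S : Finset V, S.card ≤ k →
      ∑ e ∈ Sstar \ S, (f (insert e S) - f S) ≥
        (((Sstar \ S).card : ℝ) / (k * c)) ^ (1 / θ) * f Sstar)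
    (g : ℕ → Finset V) (hg0 : g 0 = ∅)
    (hstep : ∀ i, i < k → ∃ e, e ∉ g i ∧ g (i + 1) = insert e (g i) ∧
      ∀ e', e' ∉ g i → f (insert e' (g i)) - f (g i) ≤ f (insert e (g i)) - f (g i)) :
    f (g k) ≥ (1 - (1 - θ / c) ^ (1 / θ)) * f Sstar :=
  greedy_monotonic_sharp_general f k hk c θ hc hθ0 hθ1 hnn hmono hsub Sstar hsharp g hg0 hstep
end

section
/- Let w_1 ≥ w_2 ≥ … ≥ w_n > 0 and f(S) = Σ_{i : e_i ∈ S} w_i be a linear set function on ground set V = {e_1,…,e_n}, with k ≤ n. Then S* = {e_1,…,e_k} maximizes f over sets of size at most k, and for each ℓ ∈ [k], the minimum of Σ_{e∈S*\S} f_S(e) over feasible S with |S*\S| = ℓ equals W(ℓ) := Σ_{i=k-ℓ+1}^k w_i. Hence f is (c,θ)-monotonic sharp if and only if c ≥ (ℓ/k)·(W(ℓ)/W(k))^{-θ} for all ℓ ∈ [k-1]. -/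
/-!
Exchange argument: if `#A ≤ #B` and, for an antitone weight, every element of `A \ B` lies
beyond a pivot that bounds every element of `B \ A`, then `w (A \ B) ≤ #(A \ B) • w pivot ≤
w (B \ A)`, hence `w A ≤ w B`. This shows that the prefix `S*` is optimal and that the lightest
`ℓ`-subset of `S*` consists of its last `ℓ` elements, of weight `W ℓ`. Sharpness therefore only
has to be checked on these extremal sets, where it is an inequality between `W ℓ` and `W k` that
rearranges to the bound on `c`; at level `k` this bound reads `c ≥ 1`.
-/

open Finset

theorem Antitone.sum_le_sum_of_card_le {ι : Type*} [LinearOrder ι] [DecidableEq ι]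
    {w : ι → ℝ} (hw : Antitone w) {A B : Finset ι} (m : ι) (hm : 0 ≤ w m)
    (hA : ∀ i ∈ A \ B, m ≤ i) (hB : ∀ i ∈ B \ A, i ≤ m) (hcard : #A ≤ #B) :
    ∑ i ∈ A, w i ≤ ∑ i ∈ B, w i := by
  have hcard' : #(A \ B) ≤ #(B \ A) := by
    have := card_inter_add_card_sdiff A B
    have := card_inter_add_card_sdiff B A
    rw [inter_comm] at this
    omega
  have hdiff : ∑ i ∈ A \ B, w i ≤ ∑ i ∈ B \ A, w i :=
    calc ∑ i ∈ A \ B, w i ≤ #(A \ B) • w m := sum_le_card_nsmul _ _ _ fun i hi => hw (hA i hi)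
      _ ≤ #(B \ A) • w m := nsmul_le_nsmul_left hm hcard'
      _ ≤ ∑ i ∈ B \ A, w i := card_nsmul_le_sum _ _ _ fun i hi => hw (hB i hi)
  rw [← sum_inter_add_sum_sdiff A B, ← sum_inter_add_sum_sdiff B A, inter_comm]
  exact add_le_add_right hdiff _

theorem Real.rpow_one_div_mul_le_iff {t c θ A B : ℝ} (ht : 0 < t) (hc : 0 < c) (hθ : 0 < θ)
    (hA : 0 < A) (hB : 0 < B) :
    (t / c) ^ (1 / θ) * B ≤ A ↔ t * (A / B) ^ (-θ) ≤ c := by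
  have hAB : 0 < A / B := div_pos hA hB
  have htc : 0 < t / c := div_pos ht hc
  rw [← le_div_iff₀ hB,
    ← Real.rpow_le_rpow_iff (Real.rpow_nonneg htc.le _) hAB.le hθ,
    ← Real.rpow_mul htc.le, one_div, inv_mul_cancel₀ hθ.ne', Real.rpow_one,
    Real.rpow_neg hAB.le, mul_inv_le_iff₀' (Real.rpow_pos_of_pos hAB θ), div_le_iff₀ hc]

section Window

variable {n : ℕ}

/-- The set `S*` of the `k` heaviest elements. -/
def topSet (n k : ℕ) : Finset (Fin n) := univ.filter fun i => (i : ℕ) < k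

/-- `W ℓ` of the paper is the weight of `window n (k - ℓ) k`. -/
def window (n a k : ℕ) : Finset (Fin n) := univ.filter fun i => a ≤ (i : ℕ) ∧ (i : ℕ) < k

theorem mem_topSet {k : ℕ} {i : Fin n} : i ∈ topSet n k ↔ (i : ℕ) < k := by
  simp [topSet]

theorem mem_window {a k : ℕ} {i : Fin n} : i ∈ window n a k ↔ a ≤ (i : ℕ) ∧ (i : ℕ) < k := by
  simp [window]

theorem card_topSet {k : ℕ} (hkn : k ≤ n) : #(topSet n k) = k := by
  rw [topSet, Fin.card_filter_val_lt, min_eq_right hkn]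

theorem topSet_mono {a k : ℕ} (h : a ≤ k) : topSet n a ⊆ topSet n k := fun i hi => by
  rw [mem_topSet] at *; omega

theorem topSet_sdiff_topSet {a k : ℕ} : topSet n k \ topSet n a = window n a k := by
  ext i; simp only [mem_sdiff, mem_topSet, mem_window]; omega

theorem window_zero {k : ℕ} : window n 0 k = topSet n k := by
  ext i; simp [mem_window, mem_topSet]

theorem card_window {a k : ℕ} (hak : a ≤ k) (hkn : k ≤ n) : #(window n a k) = k - a := by
  rw [← topSet_sdiff_topSet, card_sdiff_of_subset (topSet_mono hak), card_topSet hkn,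
    card_topSet (hak.trans hkn)]

end Window

section Weights

variable {n : ℕ} {w : Fin n → ℝ}

theorem sum_le_sum_topSet (hw : Antitone w) (hw0 : ∀ i, 0 ≤ w i) {k : ℕ} (hk : 1 ≤ k)
    (hkn : k ≤ n) {S : Finset (Fin n)} (hS : #S ≤ k) :
    ∑ i ∈ S, w i ≤ ∑ i ∈ topSet n k, w i := by
  refine hw.sum_le_sum_of_card_le ⟨k - 1, by omega⟩ (hw0 _) (fun i hi => ?_) (fun i hi => ?_)
    (by rwa [card_topSet hkn])
  · have := (mem_sdiff.1 hi).2
    rw [mem_topSet] at this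
    exact Fin.le_def.2 (by simp only; omega)
  · have := (mem_sdiff.1 hi).1
    rw [mem_topSet] at this
    exact Fin.le_def.2 (by simp only; omega)

theorem sum_window_le_sum_of_subset (hw : Antitone w) (hw0 : ∀ i, 0 ≤ w i) {k ℓ : ℕ}
    (hℓ : 1 ≤ ℓ) (hℓk : ℓ ≤ k) (hkn : k ≤ n) {T : Finset (Fin n)} (hT : T ⊆ topSet n k)
    (hTc : #T = ℓ) : ∑ i ∈ window n (k - ℓ) k, w i ≤ ∑ i ∈ T, w i := by
  refine hw.sum_le_sum_of_card_le ⟨k - ℓ, by omega⟩ (hw0 _) (fun i hi => ?_) (fun i hi => ?_)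
    (by rw [card_window (by omega) hkn]; omega)
  · have := (mem_sdiff.1 hi).1
    rw [mem_window] at this
    exact Fin.le_def.2 this.1
  · obtain ⟨hiT, hiW⟩ := mem_sdiff.1 hi
    have := hT hiT
    rw [mem_topSet] at this
    rw [mem_window] at hiW
    exact Fin.le_def.2 (by simp only; omega)

theorem sum_window_pos (hpos : ∀ i, 0 < w i) {a k : ℕ} (hak : a < k) (hkn : k ≤ n) :
    0 < ∑ i ∈ window n a k, w i :=
  sum_pos (fun i _ => hpos i)
    ⟨⟨k - 1, by omega⟩, mem_window.2 ⟨by simp only; omega, by simp only; omega⟩⟩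

theorem isLeast_sum_sdiff_topSet (hw : Antitone w) (hw0 : ∀ i, 0 ≤ w i) {k ℓ : ℕ}
    (hℓ : 1 ≤ ℓ) (hℓk : ℓ ≤ k) (hkn : k ≤ n) :
    IsLeast {x : ℝ | ∃ S : Finset (Fin n), #S ≤ k ∧ #(topSet n k \ S) = ℓ ∧
      x = ∑ e ∈ topSet n k \ S, w e} (∑ i ∈ window n (k - ℓ) k, w i) := by
  refine ⟨⟨topSet n (k - ℓ), ?_, ?_, by rw [topSet_sdiff_topSet]⟩, ?_⟩
  · rw [card_topSet (by omega)]; omega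
  · rw [topSet_sdiff_topSet, card_window (by omega) hkn]; omega
  · rintro _ ⟨S, -, hS, rfl⟩
    exact sum_window_le_sum_of_subset hw hw0 hℓ hℓk hkn sdiff_subset hS

theorem forall_le_sum_sdiff_topSet_iff (hw : Antitone w) (hw0 : ∀ i, 0 ≤ w i) {k : ℕ}
    (hkn : k ≤ n) {g : ℕ → ℝ} (hg : g 0 ≤ 0) :
    (∀ S : Finset (Fin n), #S ≤ k → g #(topSet n k \ S) ≤ ∑ e ∈ topSet n k \ S, w e) ↔
      ∀ ℓ, 1 ≤ ℓ → ℓ ≤ k → g ℓ ≤ ∑ i ∈ window n (k - ℓ) k, w i := by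
  constructor
  · intro h ℓ hℓ hℓk
    obtain ⟨⟨S, hS, hSℓ, hSW⟩, -⟩ := isLeast_sum_sdiff_topSet hw hw0 hℓ hℓk hkn
    simpa only [hSℓ, ← hSW] using h S hS
  · intro h S hS
    obtain hℓ | hℓ := Nat.eq_zero_or_pos #(topSet n k \ S)
    · rwa [hℓ, card_eq_zero.1 hℓ, sum_empty]
    have hℓk : #(topSet n k \ S) ≤ k := (card_le_card sdiff_subset).trans (card_topSet hkn).le
    exact (h _ hℓ hℓk).trans ((isLeast_sum_sdiff_topSet hw hw0 hℓ hℓk hkn).2 ⟨S, hS, rfl, rfl⟩)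

theorem sharp_at_level_iff (hpos : ∀ i, 0 < w i) {k ℓ : ℕ} (hℓ : 1 ≤ ℓ) (hℓk : ℓ ≤ k)
    (hkn : k ≤ n) {c θ : ℝ} (hc : 0 < c) (hθ : 0 < θ) :
    ((ℓ : ℝ) / (k * c)) ^ (1 / θ) * ∑ i ∈ topSet n k, w i ≤ ∑ i ∈ window n (k - ℓ) k, w i ↔
      (ℓ : ℝ) / k * ((∑ i ∈ window n (k - ℓ) k, w i) / ∑ i ∈ window n (k - k) k, w i) ^ (-θ)
        ≤ c := by
  rw [Nat.sub_self, window_zero, ← div_div]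
  have hℓ' : (0 : ℝ) < ℓ := by exact_mod_cast hℓ
  have hk' : (0 : ℝ) < k := by exact_mod_cast hℓ.trans hℓk
  exact Real.rpow_one_div_mul_le_iff (div_pos hℓ' hk') hc hθ (sum_window_pos hpos (by omega) hkn)
    (by simpa only [window_zero] using sum_window_pos hpos (by omega : 0 < k) hkn)

end Weights

theorem linear_sharpness_general (n k : ℕ) (hk : 1 ≤ k) (hkn : k ≤ n)
    (w : Fin n → ℝ) (hpos : ∀ i, 0 < w i)
    (hanti : ∀ i j : Fin n, i ≤ j → w j ≤ w i)
    (c θ : ℝ) (hc : 1 ≤ c) (hθ0 : 0 < θ) :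
    letI Sstar : Finset (Fin n) := Finset.univ.filter (fun i => (i : ℕ) < k)
    letI W : ℕ → ℝ := fun ℓ =>
      ∑ i ∈ Finset.univ.filter (fun i : Fin n => k - ℓ ≤ (i : ℕ) ∧ (i : ℕ) < k), w i
    (∀ S : Finset (Fin n), S.card ≤ k → ∑ i ∈ S, w i ≤ ∑ i ∈ Sstar, w i) ∧
    (∀ ℓ : ℕ, 1 ≤ ℓ → ℓ ≤ k →
      IsLeast {x : ℝ | ∃ S : Finset (Fin n), S.card ≤ k ∧ (Sstar \ S).card = ℓ ∧
        x = ∑ e ∈ Sstar \ S, w e} (W ℓ)) ∧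
    ((∀ S : Finset (Fin n), S.card ≤ k →
        ∑ e ∈ Sstar \ S, w e ≥
          (((Sstar \ S).card : ℝ) / (k * c)) ^ (1 / θ) * ∑ i ∈ Sstar, w i) ↔
      (∀ ℓ : ℕ, 1 ≤ ℓ → ℓ ≤ k - 1 → c ≥ ((ℓ : ℝ) / k) * (W ℓ / W k) ^ (-θ))) := by
  have hw0 i : 0 ≤ w i := (hpos i).le
  have hc0 : 0 < c := one_pos.trans_le hc
  have hsharp_k : c ≥ (k : ℝ) / k * ((∑ i ∈ window n (k - k) k, w i) /
      ∑ i ∈ window n (k - k) k, w i) ^ (-θ) := by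
    have hWk : ∑ i ∈ window n (k - k) k, w i ≠ 0 := (sum_window_pos hpos (by omega) hkn).ne'
    rwa [div_self hWk, Real.one_rpow, mul_one, div_self (by positivity)]
  refine ⟨fun S hS => sum_le_sum_topSet hanti hw0 hk hkn hS,
    fun ℓ hℓ hℓk => isLeast_sum_sdiff_topSet hanti hw0 hℓ hℓk hkn, ?_⟩
  refine (forall_le_sum_sdiff_topSet_iff hanti hw0 hkn
    (g := fun ℓ => ((ℓ : ℝ) / (k * c)) ^ (1 / θ) * ∑ i ∈ topSet n k, w i)
    (by simp [hθ0.ne'])).trans ?_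
  refine (forall₃_congr fun ℓ hℓ hℓk => sharp_at_level_iff hpos hℓ hℓk hkn hc0 hθ0).trans
    ⟨fun h ℓ hℓ hℓk => h ℓ hℓ (by omega), fun h ℓ hℓ hℓk => ?_⟩
  obtain hℓk | rfl := hℓk.lt_or_eq
  · exact h ℓ hℓ (by omega)
  · exact hsharp_k

/-- Proposition 2 (linear functions): with weights `w 0 ≥ w 1 ≥ … ≥ w (n-1) > 0` and
`f S = ∑_{i ∈ S} w i`, the set `S* = {0,…,k-1}` maximizes `f` over sets of size at
most `k`; for each `ℓ ∈ [k]` the minimum of `∑_{e ∈ S*\S} w e` over feasible `S` with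
`|S*\S| = ℓ` equals `W ℓ = ∑_{i=k-ℓ}^{k-1} w i`; and `f` is `(c,θ)`-monotonic sharp
iff `c ≥ (ℓ/k) (W ℓ / W k)^{-θ}` for all `ℓ ∈ [k-1]`. -/
theorem linear_sharpness (n k : ℕ) (hk : 1 ≤ k) (hkn : k ≤ n)
    (w : Fin n → ℝ) (hpos : ∀ i, 0 < w i)
    (hanti : ∀ i j : Fin n, i ≤ j → w j ≤ w i)
    (c θ : ℝ) (hc : 1 ≤ c) (hθ0 : 0 < θ) (hθ1 : θ ≤ 1) :
    letI Sstar : Finset (Fin n) := Finset.univ.filter (fun i => (i : ℕ) < k)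
    letI W : ℕ → ℝ := fun ℓ =>
      ∑ i ∈ Finset.univ.filter (fun i : Fin n => k - ℓ ≤ (i : ℕ) ∧ (i : ℕ) < k), w i
    (∀ S : Finset (Fin n), S.card ≤ k → ∑ i ∈ S, w i ≤ ∑ i ∈ Sstar, w i) ∧
    (∀ ℓ : ℕ, 1 ≤ ℓ → ℓ ≤ k →
      IsLeast {x : ℝ | ∃ S : Finset (Fin n), S.card ≤ k ∧ (Sstar \ S).card = ℓ ∧
        x = ∑ e ∈ Sstar \ S, w e} (W ℓ)) ∧
    ((∀ S : Finset (Fin n), S.card ≤ k →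
        ∑ e ∈ Sstar \ S, w e ≥
          (((Sstar \ S).card : ℝ) / (k * c)) ^ (1 / θ) * ∑ i ∈ Sstar, w i) ↔
      (∀ ℓ : ℕ, 1 ≤ ℓ → ℓ ≤ k - 1 → c ≥ ((ℓ : ℝ) / k) * (W ℓ / W k) ^ (-θ))) :=
  linear_sharpness_general n k hk hkn w hpos hanti c θ hc hθ0
end

section
/- Consider the covering instance on X = {1,…,k}^k with sets A_i = {x : x_i = 1} (i ∈ [k-1]) and B_j = {x : x_k = j} (j ∈ [k]), and coverage function f(S) = |⋃_{U∈S} U|. For ℓ ∈ [k-1] and any S of size k with |S*\S| = ℓ where S* = {B_1,…,B_k}, one has f(S) = k^k − ℓ·k^{k-ℓ-1}(k-1)^ℓ and f(S + B_j) = k^k − (ℓ-1)·k^{k-ℓ-1}(k-1)^ℓ for B_j ∈ S*\S. In particular the marginal value of each B_j ∈ S*\S equals k^{k-ℓ-1}(k-1)^ℓ. -/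
/-!
A point is missed by a family of sets `{x | x c = v}` exactly when each coordinate `x c` avoids
every value prescribed at `c`, so the uncovered points form a box, of size the product over the
coordinates of the number of values still free there. In the instance each chosen `A_i` forbids
the value `1` at coordinate `i` and the chosen `B_j` forbid their indices at the last coordinate,
so `a` chosen `A`'s and `m` missing `B`'s leave `(k-1)^a · k^(k-1-a) · m` points uncovered. If
`|S| = k` and `m = ℓ`, counting `S` shows `a = ℓ`; adding a missing `B_j` keeps `a = ℓ` and makes
`m = ℓ - 1`.
-/

open Finset

section CoordinateSets

variable {ι α : Type*} [Fintype ι] [DecidableEq ι] [Fintype α] [DecidableEq α]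

def coordSet (c : ι) (v : α) : Finset (ι → α) := {x | x c = v}

def freeValues (P : Finset (ι × α)) (c : ι) : Finset α := {v | (c, v) ∉ P}

theorem compl_biUnion_coordSet (P : Finset (ι × α)) :
    (P.biUnion fun p => coordSet p.1 p.2)ᶜ = Fintype.piFinset (freeValues P) := by
  ext x
  simp [coordSet, freeValues]

theorem card_biUnion_coordSet_add_prod (P : Finset (ι × α)) :
    #(P.biUnion fun p => coordSet p.1 p.2) + ∏ c, #(freeValues P c) =
      Fintype.card α ^ Fintype.card ι := by
  rw [← Fintype.card_piFinset, ← compl_biUnion_coordSet, card_add_card_compl, Fintype.card_fun]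

end CoordinateSets

theorem Fin.prod_univ_eq_prod_castLE_mul {M : Type*} [CommMonoid M] {k : ℕ} (hk : 0 < k)
    (f : Fin k → M) :
    ∏ c, f c = (∏ i : Fin (k - 1), f (Fin.castLE (Nat.sub_le k 1) i)) * f ⟨k - 1, by omega⟩ := by
  obtain ⟨n, rfl⟩ : ∃ n, k = n + 1 := ⟨k - 1, by omega⟩
  exact Fin.prod_univ_castSucc f

section SumFinset

variable {α β : Type*} [Fintype β] [DecidableEq β]

theorem Finset.card_image_inr_sdiff [DecidableEq α] (S : Finset (α ⊕ β)) :
    #(univ.image Sum.inr \ S) = #S.toRightᶜ := by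
  rw [← card_image_of_injective S.toRightᶜ (Sum.inr_injective (α := α))]
  congr 1
  ext (_ | _) <;> simp

theorem Finset.card_toLeft_eq_card_compl_toRight (S : Finset (α ⊕ β))
    (hS : #S = Fintype.card β) : #S.toLeft = #S.toRightᶜ := by
  have := S.card_toLeft_add_card_toRight
  have := card_le_univ S.toRight
  rw [card_compl]
  omega

end SumFinset

namespace NemhauserWolsey

variable {k : ℕ} (hk : 0 < k)

/-- The set indexed by `p` is `coordSet (label p).1 (label p).2`; coordinates and values
`1, …, k` are shifted to `0, …, k-1`. -/
def label : Fin (k - 1) ⊕ Fin k → Fin k × Fin k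
  | .inl i => (Fin.castLE (Nat.sub_le k 1) i, ⟨0, hk⟩)
  | .inr j => (⟨k - 1, by omega⟩, j)

variable (S : Finset (Fin (k - 1) ⊕ Fin k))

theorem freeValues_last :
    freeValues (S.image (label hk)) ⟨k - 1, by omega⟩ = S.toRightᶜ := by
  ext v
  simp only [freeValues, mem_filter, mem_univ, true_and, mem_image, not_exists, not_and,
    mem_compl, mem_toRight, Sum.forall, label, Prod.ext_iff, Fin.ext_iff, Fin.val_castLE]
  grind

theorem freeValues_castLE (i : Fin (k - 1)) :
    freeValues (S.image (label hk)) (Fin.castLE (Nat.sub_le k 1) i) =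
      if Sum.inl i ∈ S then {⟨0, hk⟩}ᶜ else univ := by
  ext v
  simp only [freeValues, mem_filter, mem_univ, true_and, mem_image, not_exists, not_and,
    Sum.forall, label, Prod.ext_iff, Fin.ext_iff, Fin.val_castLE]
  split_ifs <;> simp only [mem_compl, mem_singleton, mem_univ, Fin.ext_iff] <;> grind

theorem prod_card_freeValues :
    ∏ c, #(freeValues (S.image (label hk)) c) =
      (k - 1) ^ #S.toLeft * k ^ (k - 1 - #S.toLeft) * #S.toRightᶜ := by
  have hin : ({i | Sum.inl i ∈ S} : Finset (Fin (k - 1))) = S.toLeft := by ext; simp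
  have hout : ({i | Sum.inl i ∉ S} : Finset (Fin (k - 1))) = S.toLeftᶜ := by ext; simp
  rw [Fin.prod_univ_eq_prod_castLE_mul hk, freeValues_last]
  simp only [freeValues_castLE, apply_ite card, card_compl, card_singleton, card_univ,
    Fintype.card_fin]
  rw [prod_ite, prod_const, prod_const, hin, hout, card_compl, Fintype.card_fin]

theorem card_biUnion_add_card_uncovered :
    #(S.biUnion fun p => coordSet (label hk p).1 (label hk p).2) +
      (k - 1) ^ #S.toLeft * k ^ (k - 1 - #S.toLeft) * #S.toRightᶜ = k ^ k := by
  have h := card_biUnion_coordSet_add_prod (S.image (label hk))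
  rwa [image_biUnion, prod_card_freeValues hk, Fintype.card_fin] at h

theorem card_biUnion_eq :
    (#(S.biUnion fun p => coordSet (label hk p).1 (label hk p).2) : ℤ) =
      (k : ℤ) ^ k - #S.toRightᶜ * (k : ℤ) ^ (k - #S.toLeft - 1) * ((k : ℤ) - 1) ^ #S.toLeft := by
  have h := congrArg (Nat.cast : ℕ → ℤ) (card_biUnion_add_card_uncovered hk S)
  push_cast [Nat.cast_sub hk] at h
  rw [Nat.sub_right_comm] at h
  linear_combination h

end NemhauserWolsey

open NemhauserWolsey in
/-- The Nemhauser–Wolsey coverage instance on `X = {1,…,k}^k` with sets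
`A_i = {x : x_i = 1}` (`i ∈ [k-1]`) and `B_j = {x : x_k = j}` (`j ∈ [k]`): for any
`S` of size `k` with `|S* \ S| = ℓ` (`S* = {B_1,…,B_k}`, `ℓ ∈ [k-1]`), the covered
count is `f S = k^k - ℓ k^{k-ℓ-1} (k-1)^ℓ`, and adding any `B_j ∈ S* \ S` gives
`f (S + B_j) = k^k - (ℓ-1) k^{k-ℓ-1} (k-1)^ℓ`; in particular each such marginal value
is `k^{k-ℓ-1} (k-1)^ℓ`. -/
theorem coverage_instance_values (k : ℕ) (hk : 2 ≤ k) (ℓ : ℕ)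
    (cov : Fin (k - 1) ⊕ Fin k → Finset (Fin k → Fin k))
    (hcovA : ∀ i : Fin (k - 1),
      cov (Sum.inl i) =
        Finset.univ.filter (fun x : Fin k → Fin k =>
          x (Fin.castLE (by omega) i) = (⟨0, by omega⟩ : Fin k)))
    (hcovB : ∀ j : Fin k,
      cov (Sum.inr j) =
        Finset.univ.filter (fun x : Fin k → Fin k => x (⟨k - 1, by omega⟩ : Fin k) = j))
    (S : Finset (Fin (k - 1) ⊕ Fin k)) (hS : S.card = k)
    (hdiff : ((Finset.univ.image (Sum.inr : Fin k → Fin (k - 1) ⊕ Fin k)) \ S).card = ℓ) :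
    (((S.biUnion cov).card : ℤ) = (k : ℤ) ^ k - ℓ * (k : ℤ) ^ (k - ℓ - 1) * ((k : ℤ) - 1) ^ ℓ) ∧
    (∀ j : Fin k,
      Sum.inr j ∈ (Finset.univ.image (Sum.inr : Fin k → Fin (k - 1) ⊕ Fin k)) \ S →
      (((insert (Sum.inr j) S).biUnion cov).card : ℤ) =
        (k : ℤ) ^ k - ((ℓ : ℤ) - 1) * (k : ℤ) ^ (k - ℓ - 1) * ((k : ℤ) - 1) ^ ℓ) := by
  have hk0 : 0 < k := by omega
  have hcov : cov = fun p => coordSet (label hk0 p).1 (label hk0 p).2 := by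
    funext p
    cases p with
    | inl i => exact hcovA i
    | inr j => exact hcovB j
  have hmissing : #S.toRightᶜ = ℓ := by rw [← hdiff, card_image_inr_sdiff]
  have hleft : #S.toLeft = ℓ := by
    rw [card_toLeft_eq_card_compl_toRight S (by rw [hS, Fintype.card_fin]), hmissing]
  refine ⟨by rw [hcov, card_biUnion_eq, hmissing, hleft], fun j hj => ?_⟩
  have hjS : j ∉ S.toRight := by simpa using (mem_sdiff.1 hj).2
  have hmissing' : #(insert j S.toRight)ᶜ + 1 = ℓ := by
    rw [← hmissing, compl_insert, card_erase_add_one (mem_compl.2 hjS)]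
  rw [hcov, card_biUnion_eq, toLeft_insert_inr, toRight_insert_inr, hleft, ← hmissing']
  push_cast
  ring
end

section
/- For every integer k ≥ 1 and every ℓ ∈ [k-1], the inequality (ℓ/k)·((k-1)/k)^ℓ ≥ (ℓ/k)^k holds; consequently the worst-case coverage function of Nemhauser–Wolsey is (1, 1/k)-monotonic sharp. -/
theorem pow_le_pow_of_le_of_le_one {M₀ : Type*} [MonoidWithZero M₀] [Preorder M₀]
    [PosMulMono M₀] [MulPosMono M₀] {a b : M₀} {m n : ℕ}
    (ha : 0 ≤ a) (hab : a ≤ b) (hb : b ≤ 1) (hmn : m ≤ n) : a ^ n ≤ b ^ m :=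
  (pow_le_pow_left₀ ha hab n).trans (pow_le_pow_of_le_one (ha.trans hab) hb hmn)

theorem coverage_sharp_inequality_general (k ℓ : ℕ) (hk : 2 ≤ k)
    (hℓ : ℓ ≤ k - 1) :
    ((ℓ : ℝ) / k) * (((k : ℝ) - 1) / k) ^ ℓ ≥ ((ℓ : ℝ) / k) ^ k ∧
    (((k : ℝ) - 1) / k) ^ ℓ ≥ ((ℓ : ℝ) / k) ^ (k - 1) := by
  have hk_pos : (0 : ℝ) < k := by positivity
  have hℓ_real : (ℓ : ℝ) ≤ k - 1 := by
    rw [← Nat.cast_one, ← Nat.cast_sub (by omega)]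
    exact_mod_cast hℓ
  have hratio_nonneg : (0 : ℝ) ≤ ℓ / k := by positivity
  have hratio_le : (ℓ : ℝ) / k ≤ (k - 1) / k := by gcongr
  have hratio_le_one : ((k : ℝ) - 1) / k ≤ 1 := by
    rw [div_le_one hk_pos]
    linarith
  have key : ((ℓ : ℝ) / k) ^ (k - 1) ≤ (((k : ℝ) - 1) / k) ^ ℓ :=
    pow_le_pow_of_le_of_le_one hratio_nonneg hratio_le hratio_le_one hℓ
  refine ⟨?_, key⟩
  calc ((ℓ : ℝ) / k) ^ k = (ℓ / k) * (ℓ / k) ^ (k - 1) := by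
        rw [← pow_succ', Nat.sub_add_cancel (by omega)]
    _ ≤ (ℓ / k) * (((k : ℝ) - 1) / k) ^ ℓ := mul_le_mul_of_nonneg_left key hratio_nonneg

/-- For every `k` and `ℓ ∈ [k-1]`, `(ℓ/k) ((k-1)/k)^ℓ ≥ (ℓ/k)^k`; this follows from
`((k-1)/k)^ℓ ≥ (ℓ/k)^{k-1}`, and shows the worst-case Nemhauser–Wolsey coverage
function is `(1, 1/k)`-monotonic sharp. -/
theorem coverage_sharp_inequality (k ℓ : ℕ) (hk : 2 ≤ k) (hℓ1 : 1 ≤ ℓ)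
    (hℓ : ℓ ≤ k - 1) :
    ((ℓ : ℝ) / k) * (((k : ℝ) - 1) / k) ^ ℓ ≥ ((ℓ : ℝ) / k) ^ k ∧
    (((k : ℝ) - 1) / k) ^ ℓ ≥ ((ℓ : ℝ) / k) ^ (k - 1) :=
  coverage_sharp_inequality_general k ℓ hk hℓ
end

section
/- Let k ≥ 2, V = [2k], and f(S) = min{|S|, k+1}. Then f is monotone submodular, its total curvature γ = 1 − min_{e}(f(V−e+e)−f(V−e))/f({e}) equals 1, yet f is (1,1)-monotonic sharp: for any optimal S* (any k-set) and any S with |S| ≤ k, Σ_{e∈S*\S} f_S(e)/f(S*) = |S*\S|/k, so the sharpness inequality holds with c = θ = 1. -/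
lemma marginal_antitone (k m n : ℕ) (h : m ≤ n) :
    min ((n : ℝ) + 1) ((k : ℝ) + 1) - min (n : ℝ) ((k : ℝ) + 1) ≤
      min ((m : ℝ) + 1) ((k : ℝ) + 1) - min (m : ℝ) ((k : ℝ) + 1) := by
  rcases le_or_gt (k + 1) m with hm | hm
  · have hn : k + 1 ≤ n := hm.trans h
    have hm' : (k : ℝ) + 1 ≤ m := by exact_mod_cast hm
    have hn' : (k : ℝ) + 1 ≤ n := by exact_mod_cast hn
    rw [min_eq_right hm', min_eq_right hn', min_eq_right (by linarith),
      min_eq_right (by linarith)]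
  · have hm' : (m : ℝ) < k + 1 := by exact_mod_cast hm
    have hm1 : (m : ℝ) + 1 ≤ (k : ℝ) + 1 := by exact_mod_cast Nat.succ_le_of_lt hm
    rw [min_eq_left hm'.le, min_eq_left hm1]
    have h1 : min ((n : ℝ) + 1) ((k : ℝ) + 1) ≤ (n : ℝ) + 1 := min_le_left _ _
    have h3 : min ((n : ℝ) + 1) ((k : ℝ) + 1) ≤ (k : ℝ) + 1 := min_le_right _ _
    rcases le_total (n : ℝ) ((k : ℝ) + 1) with hc | hc
    · rw [min_eq_left hc] at *; linarith
    · rw [min_eq_right hc] at *; linarith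

/-- The example `f S = min(|S|, k+1)` on `V = [2k]` (`k ≥ 2`): `f` is monotone and
submodular, its total curvature equals 1 (each `f_{V-e}(e) = 0` while `f {e} = 1`),
yet for any optimal `S*` (`|S*| = k`) and any feasible `S`,
`∑_{e ∈ S*\S} f_S(e) = |S*\S|`, so the `(1,1)`-monotonic sharpness inequality holds
(with equality). -/
theorem curvature_vs_sharpness (k : ℕ) (hk : 2 ≤ k) :
    letI f : Finset (Fin (2 * k)) → ℝ := fun S => min (S.card : ℝ) ((k : ℝ) + 1)
    (∀ A B : Finset (Fin (2 * k)), A ⊆ B → f A ≤ f B) ∧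
    (∀ (A B : Finset (Fin (2 * k))) (e : Fin (2 * k)), A ⊆ B → e ∉ B →
      f (insert e B) - f B ≤ f (insert e A) - f A) ∧
    (∀ e : Fin (2 * k), f Finset.univ - f (Finset.univ.erase e) = 0) ∧
    (∀ e : Fin (2 * k), f {e} = 1) ∧
    (∀ Sstar : Finset (Fin (2 * k)), Sstar.card = k →
      ∀ S : Finset (Fin (2 * k)), S.card ≤ k →
        (∑ e ∈ Sstar \ S, (f (insert e S) - f S)) = ((Sstar \ S).card : ℝ) ∧
        (∑ e ∈ Sstar \ S, (f (insert e S) - f S)) ≥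
          (((Sstar \ S).card : ℝ) / (k * 1)) ^ ((1 : ℝ) / 1) * f Sstar) := by
  beta_reduce
  have hkR : (1 : ℝ) ≤ k := by exact_mod_cast hk.trans' (by norm_num)
  refine ⟨?_, ?_, ?_, ?_, ?_⟩
  · intro A B hAB
    have : (A.card : ℝ) ≤ B.card := by exact_mod_cast Finset.card_le_card hAB
    exact min_le_min this le_rfl
  · intro A B e hAB heB
    have heA : e ∉ A := fun h => heB (hAB h)
    simp only [Finset.card_insert_of_notMem heA, Finset.card_insert_of_notMem heB]
    push_cast
    exact marginal_antitone k A.card B.card (Finset.card_le_card hAB)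
  · intro e
    have h1 : (Finset.univ : Finset (Fin (2 * k))).card = 2 * k := by simp
    have h2 : (Finset.univ.erase e).card = 2 * k - 1 := by
      rw [Finset.card_erase_of_mem (Finset.mem_univ e), h1]
    simp only [h1, h2]
    have hle1 : (k : ℝ) + 1 ≤ ((2 * k : ℕ) : ℝ) := by push_cast; linarith
    have hle2 : (k : ℝ) + 1 ≤ ((2 * k - 1 : ℕ) : ℝ) := by
      have h4 : k + 1 ≤ 2 * k - 1 := by omega
      have h3 : ((k + 1 : ℕ) : ℝ) ≤ ((2 * k - 1 : ℕ) : ℝ) := by exact_mod_cast h4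
      push_cast at h3 ⊢
      linarith
    rw [min_eq_right hle1, min_eq_right hle2]
    ring
  · intro e
    simp only [Finset.card_singleton]
    rw [min_eq_left (by push_cast; linarith)]
    norm_num
  · intro Sstar hSstar S hS
    have key : ∀ e ∈ Sstar \ S, min ((insert e S).card : ℝ) ((k:ℝ)+1) - min (S.card : ℝ) ((k:ℝ)+1) = 1 := by
      intro e he
      have heS : e ∉ S := (Finset.mem_sdiff.mp he).2
      simp only [Finset.card_insert_of_notMem heS]
      have h1 : (S.card : ℝ) + 1 ≤ (k : ℝ) + 1 := by
        have : (S.card : ℝ) ≤ k := by exact_mod_cast hS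
        linarith
      rw [min_eq_left (by push_cast; linarith), min_eq_left (by linarith)]
      push_cast; ring
    have hsum : (∑ e ∈ Sstar \ S, (min ((insert e S).card : ℝ) ((k:ℝ)+1) - min (S.card : ℝ) ((k:ℝ)+1))) = ((Sstar \ S).card : ℝ) := by
      rw [Finset.sum_congr rfl key, Finset.sum_const, nsmul_eq_mul, mul_one]
    refine ⟨hsum, ?_⟩
    rw [hsum]
    have hfS : min ((Sstar.card : ℝ)) ((k:ℝ)+1) = k := by
      simp only [hSstar]
      rw [min_eq_left (by linarith)]
    rw [hfS]
    have h11 : ((1 : ℝ) / 1) = 1 := by norm_num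
    rw [h11, Real.rpow_one, mul_one, div_mul_cancel₀ _ (by positivity : (k:ℝ) ≠ 0)]
end
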